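/- arXiv:2004.08529 — 4 statements merged into one kernel-verified Lean document; each statement's English description precedes it below -/
import Mathlib

section
/- For 0 < s < 1, 1 ≤ p < ∞, and f : ℝ^n → ℝ measurable, the caloric Besov seminorm satisfies the identity 𝒩^Δ_{s,p}(f)^p = (2^{sp} Γ((n+sp)/2) / π^{n/2}) · [f]_{s,p}^p, where [f]_{s,p}^p = ∫_{ℝ^n}∫_{ℝ^n} |f(x)-f(y)|^p / |x-y|^{n+ps} dx dy (both sides possibly being +∞). -/
/-!
By Tonelli the time integral can be moved innermost. For `x ≠ y` it is, after the
substitution `t ↦ 1 / t`, a Gamma integral: `∫₀^∞ t^(-a-1) e^(-b/t) dt = Γ(a) b^(-a)` with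
`a = (n + sp)/2` and `b = |x - y|² / 4`, which gives
`2^(sp) Γ((n+sp)/2) π^(-n/2) |x - y|^(-(n+sp))`.
The diagonal `x = y` contributes zero on both sides since `p > 0`.
-/

open MeasureTheory Real ENNReal Set

lemma lintegral_lintegral_lintegral_rotate {α β γ : Type*} [MeasurableSpace α]
    [MeasurableSpace β] [MeasurableSpace γ] {μ : Measure α} {ν : Measure β} {ρ : Measure γ}
    [SFinite μ] [SFinite ν] [SFinite ρ] {F : α → β → γ → ℝ≥0∞}
    (hF : Measurable (Function.uncurry (Function.uncurry F))) :
    ∫⁻ a, ∫⁻ b, ∫⁻ c, F a b c ∂ρ ∂ν ∂μ = ∫⁻ b, ∫⁻ c, ∫⁻ a, F a b c ∂μ ∂ρ ∂ν := by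
  rw [lintegral_lintegral_swap hF.lintegral_prod_right'.aemeasurable]
  refine lintegral_congr fun b ↦ lintegral_lintegral_swap ?_
  exact (hF.comp ((measurable_fst.prodMk measurable_const).prodMk measurable_snd)).aemeasurable

lemma lintegral_Ioi_rpow_mul_exp_neg_div {a b : ℝ} (ha : 0 < a) (hb : 0 < b) :
    ∫⁻ t in Ioi 0, ENNReal.ofReal (t ^ (-a - 1) * exp (-b / t)) =
      ENNReal.ofReal (Gamma a * b ^ (-a)) := by
  have hint : IntegrableOn (fun u : ℝ ↦ u ^ (a - 1) * exp (-(b * u))) (Ioi 0) := by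
    simpa using integrableOn_rpow_mul_exp_neg_mul_rpow (s := a - 1) (by linarith) one_pos hb
  have hGamma : ∫⁻ u in Ioi 0, ENNReal.ofReal (u ^ (a - 1) * exp (-(b * u))) =
      ENNReal.ofReal (Gamma a * b ^ (-a)) := by
    rw [← ofReal_integral_eq_lintegral_ofReal hint, integral_rpow_mul_exp_neg_mul_Ioi ha hb,
      one_div, inv_rpow hb.le, ← rpow_neg hb.le, mul_comm]
    filter_upwards [ae_restrict_mem measurableSet_Ioi] with u hu
    exact mul_nonneg (rpow_nonneg (le_of_lt hu) _) (exp_pos _).le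
  have hinv : Inv.inv '' Ioi (0 : ℝ) = Ioi 0 := by ext; simp
  rw [← hGamma, ← hinv, lintegral_image_eq_lintegral_abs_deriv_mul measurableSet_Ioi
    (fun t ht ↦ (hasDerivAt_inv (ne_of_gt ht)).hasDerivWithinAt) inv_injective.injOn, hinv]
  refine setLIntegral_congr_fun measurableSet_Ioi fun t (ht : (0 : ℝ) < t) ↦ ?_
  rw [← ENNReal.ofReal_mul (abs_nonneg _)]
  congr 1
  rw [abs_neg, abs_of_pos (by positivity), inv_rpow ht.le, ← rpow_neg ht.le,
    ← Real.rpow_natCast, ← rpow_neg ht.le, ← mul_assoc, ← rpow_add ht, div_inv_eq_mul, neg_mul]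
  ring_nf

lemma four_mul_pi_rpow_neg_half (N : ℝ) : (4 * π) ^ (-N / 2) = (2 ^ N)⁻¹ * (π ^ (N / 2))⁻¹ := by
  rw [mul_rpow (by norm_num) pi_pos.le, ← rpow_neg pi_pos.le, neg_div,
    show (4 : ℝ) = 2 ^ (2 : ℕ) by norm_num, ← Real.rpow_natCast_mul (by norm_num),
    ← Real.rpow_neg (by norm_num)]
  congr 2
  push_cast
  ring

noncomputable def caloricWeight (N σ t r : ℝ) : ℝ≥0∞ :=
  ENNReal.ofReal (t ^ (-(σ / 2 + 1))) * ENNReal.ofReal ((4 * π * t) ^ (-N / 2)) *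
    ENNReal.ofReal (exp (-r ^ 2 / (4 * t)))

lemma lintegral_Ioi_caloricWeight {N σ r : ℝ} (hNσ : 0 < N + σ) (hr : 0 < r) :
    ∫⁻ t in Ioi 0, caloricWeight N σ t r =
      ENNReal.ofReal (2 ^ σ * Gamma ((N + σ) / 2) / π ^ (N / 2) / r ^ (N + σ)) := by
  set a := (N + σ) / 2 with ha_def
  have ha : 0 < a := by positivity
  have hpt : ∀ t ∈ Ioi (0 : ℝ), caloricWeight N σ t r = ENNReal.ofReal ((4 * π) ^ (-N / 2)) *
      ENNReal.ofReal (t ^ (-a - 1) * exp (-(r / 2) ^ 2 / t)) := by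
    intro t (ht : 0 < t)
    rw [caloricWeight, ← ENNReal.ofReal_mul (by positivity),
      ← ENNReal.ofReal_mul (by positivity), ← ENNReal.ofReal_mul (by positivity),
      mul_rpow (by positivity) ht.le]
    congr 1
    have ht_pow : t ^ (-(σ / 2 + 1)) * t ^ (-N / 2) = t ^ (-a - 1) := by
      rw [← rpow_add ht, ha_def]; ring_nf
    rw [← ht_pow]
    ring_nf
  have hr_pow : ((r / 2) ^ 2) ^ (-a) = 2 ^ (N + σ) * (r ^ (N + σ))⁻¹ := by
    rw [← Real.rpow_natCast, ← rpow_mul (by positivity), div_rpow hr.le (by norm_num), ha_def,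
      show ((2 : ℕ) : ℝ) * -((N + σ) / 2) = -(N + σ) by push_cast; ring, rpow_neg hr.le,
      rpow_neg two_pos.le, div_inv_eq_mul, mul_comm]
  rw [setLIntegral_congr_fun measurableSet_Ioi hpt, lintegral_const_mul' _ _ ofReal_ne_top,
    lintegral_Ioi_rpow_mul_exp_neg_div ha (by positivity),
    ← ENNReal.ofReal_mul (by positivity), four_mul_pi_rpow_neg_half, hr_pow, rpow_add two_pos]
  congr 1
  field_simp

theorem stmt_1_general (n : ℕ) (s p : ℝ) (hs0 : 0 < s) (hp : 1 ≤ p)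
    (f : EuclideanSpace ℝ (Fin n) → ℝ) (hf : Measurable f) :
    (∫⁻ t in Set.Ioi (0 : ℝ),
        ENNReal.ofReal (t ^ (-(s * p / 2 + 1))) *
          ∫⁻ x, ENNReal.ofReal ((4 * π * t) ^ (-(n : ℝ) / 2)) *
            ∫⁻ y, ENNReal.ofReal
              (Real.exp (-‖x - y‖ ^ 2 / (4 * t)) * |f y - f x| ^ p))
    = ENNReal.ofReal (2 ^ (s * p) * Real.Gamma ((n + s * p) / 2) / π ^ ((n : ℝ) / 2)) *
        ∫⁻ x, ∫⁻ y, ENNReal.ofReal (|f x - f y| ^ p / ‖x - y‖ ^ ((n : ℝ) + p * s)) := by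
  have hp0 : 0 < p := by linarith
  have htime : ∀ x y,
      ∫⁻ t in Ioi 0, caloricWeight n (s * p) t ‖x - y‖ * ENNReal.ofReal (|f x - f y| ^ p) =
        ENNReal.ofReal (2 ^ (s * p) * Gamma ((n + s * p) / 2) / π ^ ((n : ℝ) / 2)) *
        ENNReal.ofReal (|f x - f y| ^ p / ‖x - y‖ ^ ((n : ℝ) + p * s)) := by
    intro x y
    rcases eq_or_ne x y with rfl | hxy
    · simp [zero_rpow hp0.ne']
    rw [lintegral_mul_const' _ _ ofReal_ne_top, lintegral_Ioi_caloricWeight (by positivity)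
      (norm_pos_iff.mpr (sub_ne_zero.mpr hxy)), ← ENNReal.ofReal_mul (by positivity),
      ← ENNReal.ofReal_mul (by positivity), mul_comm p s]
    congr 1
    ring
  calc _ = ∫⁻ t in Ioi 0, ∫⁻ x, ∫⁻ y,
        caloricWeight n (s * p) t ‖x - y‖ * ENNReal.ofReal (|f x - f y| ^ p) := by
        refine lintegral_congr fun t ↦ ?_
        rw [← lintegral_const_mul' _ _ ofReal_ne_top]
        refine lintegral_congr fun x ↦ ?_
        rw [← lintegral_const_mul' _ _ ofReal_ne_top, ← lintegral_const_mul' _ _ ofReal_ne_top]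
        refine lintegral_congr fun y ↦ ?_
        rw [caloricWeight, ENNReal.ofReal_mul (exp_pos _).le, abs_sub_comm]
        ring
    _ = ∫⁻ x, ∫⁻ y, ∫⁻ t in Ioi 0,
        caloricWeight n (s * p) t ‖x - y‖ * ENNReal.ofReal (|f x - f y| ^ p) :=
        lintegral_lintegral_lintegral_rotate (by unfold caloricWeight; fun_prop)
    _ = _ := by simp_rw [htime, lintegral_const_mul' _ _ ofReal_ne_top]

/-- The caloric Besov seminorm identity
`𝒩^Δ_{s,p}(f)^p = (2^{sp} Γ((n+sp)/2) / π^{n/2}) · [f]_{s,p}^p`,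
both sides possibly being `+∞`. -/
theorem stmt_1 (n : ℕ) (s p : ℝ) (hs0 : 0 < s) (hs1 : s < 1) (hp : 1 ≤ p)
    (f : EuclideanSpace ℝ (Fin n) → ℝ) (hf : Measurable f) :
    (∫⁻ t in Set.Ioi (0 : ℝ),
        ENNReal.ofReal (t ^ (-(s * p / 2 + 1))) *
          ∫⁻ x, ENNReal.ofReal ((4 * π * t) ^ (-(n : ℝ) / 2)) *
            ∫⁻ y, ENNReal.ofReal
              (Real.exp (-‖x - y‖ ^ 2 / (4 * t)) * |f y - f x| ^ p))
    = ENNReal.ofReal (2 ^ (s * p) * Real.Gamma ((n + s * p) / 2) / π ^ ((n : ℝ) / 2)) *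
        ∫⁻ x, ∫⁻ y, ENNReal.ofReal (|f x - f y| ^ p / ‖x - y‖ ^ ((n : ℝ) + p * s)) :=
  stmt_1_general n s p hs0 hp f hf
end

section
/- Let (P_t)_{t>0} be a family of linear operators on L^1 of a measure space such that ‖P_t u‖_1 ≤ ‖u‖_1 for all u and t > 0. Let E be a measurable set with finite measure, and define Φ(s) = ∫_0^∞ t^{-(1+s)} ‖P_t 1_E - 1_E‖_1 dt for 0 < s < 1/2. Then limsup_{s→(1/2)^-} (1-2s) Φ(s) ≤ limsup_{t→0^+} (4/t)^{1/2} ‖P_t 1_E - 1_E‖_1. -/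
/-!
Contractivity bounds `g t = ‖P_t 1_E - 1_E‖₁` by `2 |E|`, so the part of `Φ(s)` over `t > δ` is
`O(δ^{-s} / s)` and is killed by the factor `1 - 2s`. If `√(4/t) g t < c` on `(0, δ]`, then
`g t ≤ (c/2) √t` there, so the part over `(0, δ]` is at most `(c/2) δ^{1/2-s} / (1/2 - s)`, and
`1 - 2s` times this tends to `c` as `s → 1/2`.
-/

open MeasureTheory Filter Set Topology
open scoped ENNReal

theorem setLIntegral_ofReal_le_ofReal_setIntegral {α : Type*} [MeasurableSpace α]
    {μ : Measure α} {s : Set α} {f h : α → ℝ} (hs : MeasurableSet s)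
    (hfh : ∀ x ∈ s, f x ≤ h x) (hh : IntegrableOn h s μ) (h0 : ∀ x ∈ s, 0 ≤ h x) :
    ∫⁻ x in s, ENNReal.ofReal (f x) ∂μ ≤ ENNReal.ofReal (∫ x in s, h x ∂μ) := by
  rw [ofReal_integral_eq_lintegral_ofReal hh
    (by filter_upwards [ae_restrict_mem hs] with x hx using h0 x hx)]
  exact setLIntegral_mono' hs fun x hx => ENNReal.ofReal_le_ofReal (hfh x hx)

theorem integrableOn_Ioc_zero_rpow {r δ : ℝ} (hr : -1 < r) (hδ : 0 ≤ δ) :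
    IntegrableOn (fun t : ℝ => t ^ r) (Ioc 0 δ) :=
  (intervalIntegrable_iff_integrableOn_Ioc_of_le hδ).mp
    (intervalIntegral.intervalIntegrable_rpow' hr)

theorem integral_Ioc_zero_rpow {r δ : ℝ} (hr : -1 < r) (hδ : 0 ≤ δ) :
    ∫ t in Ioc 0 δ, t ^ r = δ ^ (r + 1) / (r + 1) := by
  rw [← intervalIntegral.integral_of_le hδ, integral_rpow (Or.inl hr),
    Real.zero_rpow (by linarith), sub_zero]

theorem setLIntegral_Ioc_rpow_mul_le {g : ℝ → ℝ} {K δ s : ℝ} (hK : 0 ≤ K) (hδ : 0 ≤ δ)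
    (hs : s < 1 / 2) (hg : ∀ t ∈ Ioc 0 δ, g t ≤ K * √t) :
    ∫⁻ t in Ioc 0 δ, ENNReal.ofReal (t ^ (-(1 + s)) * g t)
      ≤ ENNReal.ofReal (K * (δ ^ (1 / 2 - s) / (1 / 2 - s))) := by
  have hr : -1 < -(1 / 2 + s) := by linarith
  have hbound : ∀ t ∈ Ioc (0 : ℝ) δ, t ^ (-(1 + s)) * g t ≤ K * t ^ (-(1 / 2 + s)) :=
    fun t ht => calc
      t ^ (-(1 + s)) * g t ≤ t ^ (-(1 + s)) * (K * √t) :=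
        mul_le_mul_of_nonneg_left (hg t ht) (Real.rpow_nonneg ht.1.le _)
      _ = K * t ^ (-(1 / 2 + s)) := by
        rw [Real.sqrt_eq_rpow, show -(1 / 2 + s) = -(1 + s) + 1 / 2 by ring,
          Real.rpow_add ht.1]
        ring
  refine (setLIntegral_ofReal_le_ofReal_setIntegral measurableSet_Ioc hbound
    ((integrableOn_Ioc_zero_rpow hr hδ).const_mul K)
    fun t ht => mul_nonneg hK (Real.rpow_nonneg ht.1.le _)).trans_eq ?_
  rw [integral_const_mul, integral_Ioc_zero_rpow hr hδ, show -(1 / 2 + s) + 1 = 1 / 2 - s by ring]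

theorem setLIntegral_Ioi_rpow_mul_le {g : ℝ → ℝ} {M δ s : ℝ} (hM : 0 ≤ M) (hδ : 0 < δ)
    (hs : 0 < s) (hg : ∀ t ∈ Ioi δ, g t ≤ M) :
    ∫⁻ t in Ioi δ, ENNReal.ofReal (t ^ (-(1 + s)) * g t)
      ≤ ENNReal.ofReal (M * (δ ^ (-s) / s)) := by
  have ha : -(1 + s) < -1 := by linarith
  have hbound : ∀ t ∈ Ioi δ, t ^ (-(1 + s)) * g t ≤ M * t ^ (-(1 + s)) := fun t ht => by
    rw [mul_comm M]
    exact mul_le_mul_of_nonneg_left (hg t ht) (Real.rpow_nonneg (hδ.trans ht).le _)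
  refine (setLIntegral_ofReal_le_ofReal_setIntegral measurableSet_Ioi hbound
    ((integrableOn_Ioi_rpow_of_lt ha hδ).const_mul M)
    fun t ht => mul_nonneg hM (Real.rpow_nonneg (hδ.trans ht).le _)).trans_eq ?_
  rw [integral_const_mul, integral_Ioi_rpow_of_lt ha hδ, show -(1 + s) + 1 = -s by ring,
    neg_div_neg_eq]

theorem tendsto_one_sub_two_mul_rpow_bound {K M δ : ℝ} (hδ : 0 < δ) :
    Tendsto (fun s : ℝ => (1 - 2 * s) * (K * (δ ^ (1 / 2 - s) / (1 / 2 - s)) + M * (δ ^ (-s) / s)))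
      (𝓝[<] (1 / 2)) (𝓝 (2 * K)) := by
  have hcont : ContinuousAt
      (fun s : ℝ => 2 * K * δ ^ (1 / 2 - s) + (1 - 2 * s) * (M * (δ ^ (-s) / s))) (1 / 2) := by
    have hpow : Continuous fun s : ℝ => δ ^ s := Real.continuous_const_rpow hδ.ne'
    fun_prop (disch := norm_num)
  have hval : 2 * K * δ ^ (1 / 2 - 1 / 2 : ℝ) +
      (1 - 2 * (1 / 2 : ℝ)) * (M * (δ ^ (-(1 / 2 : ℝ)) / (1 / 2))) = 2 * K := by norm_num
  refine (hval ▸ hcont.tendsto.mono_left nhdsWithin_le_nhds).congr' ?_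
  filter_upwards [self_mem_nhdsWithin] with s (hs : s < 1 / 2)
  have hne : 1 - 2 * s ≠ 0 := by linarith
  have hcancel : (1 - 2 * s) * (K * (δ ^ (1 / 2 - s) / (1 / 2 - s))) = 2 * K * δ ^ (1 / 2 - s) := by
    field_simp
  rw [mul_add, hcancel]

theorem exists_le_mul_sqrt_of_limsup_lt {g : ℝ → ℝ} {c : ℝ≥0∞}
    (hc : limsup (fun t : ℝ => ENNReal.ofReal (√(4 / t) * g t)) (𝓝[>] 0) < c) (hc_top : c ≠ ⊤) :
    ∃ δ > 0, ∀ t ∈ Ioc 0 δ, g t ≤ c.toReal / 2 * √t := by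
  obtain ⟨δ, hδ, hsub⟩ := mem_nhdsGT_iff_exists_Ioc_subset.mp (eventually_lt_of_limsup_lt hc)
  refine ⟨δ, hδ, fun t ht => ?_⟩
  have hle : √(4 / t) * g t ≤ c.toReal :=
    (ENNReal.ofReal_le_iff_le_toReal hc_top).mp (hsub ht).le
  have hmul : √(4 / t) * √t = 2 := by
    rw [← Real.sqrt_mul (div_nonneg zero_le_four ht.1.le), div_mul_cancel₀ _ ht.1.ne',
      show (4 : ℝ) = 2 ^ 2 by norm_num, Real.sqrt_sq zero_le_two]
  calc g t = √(4 / t) * g t * √t / 2 := by rw [mul_right_comm, hmul]; ring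
    _ ≤ c.toReal * √t / 2 := by gcongr
    _ = c.toReal / 2 * √t := by ring

theorem limsup_one_sub_two_mul_lintegral_rpow_le {g : ℝ → ℝ} {M : ℝ} (hg : ∀ t > 0, g t ≤ M) :
    limsup (fun s : ℝ => ENNReal.ofReal (1 - 2 * s) *
        ∫⁻ t in Ioi (0 : ℝ), ENNReal.ofReal (t ^ (-(1 + s)) * g t)) (𝓝[<] (1 / 2))
      ≤ limsup (fun t : ℝ => ENNReal.ofReal (√(4 / t) * g t)) (𝓝[>] 0) := by
  refine le_of_forall_gt_imp_ge_of_dense fun c hc => ?_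
  obtain rfl | hc_top := eq_or_ne c ⊤
  · exact le_top
  obtain ⟨δ, hδ, hnear⟩ := exists_le_mul_sqrt_of_limsup_lt hc hc_top
  have hbound : ∀ s ∈ Ioo (0 : ℝ) (1 / 2),
      ENNReal.ofReal (1 - 2 * s) * ∫⁻ t in Ioi (0 : ℝ), ENNReal.ofReal (t ^ (-(1 + s)) * g t)
        ≤ ENNReal.ofReal ((1 - 2 * s) * (c.toReal / 2 * (δ ^ (1 / 2 - s) / (1 / 2 - s)) +
          max M 0 * (δ ^ (-s) / s))) := by
    rintro s ⟨hs0, hs2⟩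
    rw [← Ioc_union_Ioi_eq_Ioi hδ.le, lintegral_union measurableSet_Ioi Ioc_disjoint_Ioi_same,
      ENNReal.ofReal_mul (by linarith),
      ENNReal.ofReal_add (mul_nonneg (by positivity) (div_nonneg (by positivity) (by linarith)))
        (by positivity)]
    gcongr
    · exact setLIntegral_Ioc_rpow_mul_le (by positivity) hδ.le hs2 hnear
    · exact setLIntegral_Ioi_rpow_mul_le (le_max_right _ _) hδ hs0
        fun t ht => (hg t (hδ.trans ht)).trans (le_max_left _ _)
  calc _ ≤ limsup (fun s : ℝ => ENNReal.ofReal ((1 - 2 * s) *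
          (c.toReal / 2 * (δ ^ (1 / 2 - s) / (1 / 2 - s)) + max M 0 * (δ ^ (-s) / s))))
          (𝓝[<] (1 / 2)) :=
        limsup_le_limsup (eventually_of_mem (Ioo_mem_nhdsLT (by norm_num)) hbound)
    _ = ENNReal.ofReal (2 * (c.toReal / 2)) :=
        (ENNReal.tendsto_ofReal (tendsto_one_sub_two_mul_rpow_bound hδ)).limsup_eq
    _ = c := by rw [mul_div_cancel₀ _ two_ne_zero, ENNReal.ofReal_toReal hc_top]

/-- If `(P_t)` is a family of linear contractions on `L¹` and `E` has finite measure, then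
`limsup_{s→(1/2)⁻} (1-2s) Φ(s) ≤ limsup_{t→0⁺} √(4/t) ‖P_t 1_E - 1_E‖₁`, where
`Φ(s) = ∫_0^∞ t^{-(1+s)} ‖P_t 1_E - 1_E‖₁ dt`. -/
theorem stmt_3 {α : Type*} [MeasurableSpace α] {μ : Measure α}
    (P : ℝ → (Lp ℝ 1 μ →ₗ[ℝ] Lp ℝ 1 μ))
    (hcontr : ∀ t > (0 : ℝ), ∀ u : Lp ℝ 1 μ, ‖P t u‖ ≤ ‖u‖)
    (E : Set α) (hE : MeasurableSet E) (hEfin : μ E ≠ ⊤) :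
    limsup (fun s : ℝ => ENNReal.ofReal (1 - 2 * s) *
        ∫⁻ t in Ioi (0 : ℝ), ENNReal.ofReal
          (t ^ (-(1 + s)) * ‖P t (indicatorConstLp 1 hE hEfin (1 : ℝ)) -
            indicatorConstLp 1 hE hEfin (1 : ℝ)‖))
      (nhdsWithin (1 / 2 : ℝ) (Iio (1 / 2)))
    ≤ limsup (fun t : ℝ => ENNReal.ofReal
        (Real.sqrt (4 / t) * ‖P t (indicatorConstLp 1 hE hEfin (1 : ℝ)) -
          indicatorConstLp 1 hE hEfin (1 : ℝ)‖)) (nhdsWithin (0 : ℝ) (Ioi 0)) := by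
  set f := indicatorConstLp 1 hE hEfin (1 : ℝ)
  refine limsup_one_sub_two_mul_lintegral_rpow_le (M := 2 * ‖f‖) fun t ht => ?_
  calc ‖P t f - f‖ ≤ ‖P t f‖ + ‖f‖ := norm_sub_le _ _
    _ ≤ 2 * ‖f‖ := by linarith [hcontr t ht f]
end

section
/- Let (P_t)_{t>0} be any family of linear operators on L^1 of a measure space, E a measurable set, and define Φ(s) = ∫_0^∞ t^{-(1+s)} ‖P_t 1_E - 1_E‖_1 dt for 0 < s < 1/2 (with values in [0,∞]). Then liminf_{s→(1/2)^-} (1-2s) Φ(s) ≥ liminf_{t→0^+} (4/t)^{1/2} ‖P_t 1_E - 1_E‖_1. -/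
/-!
With `a = 1/2 - s` one has `(1 - 2s) t^{-(1+s)} = a t^{a-1} · √(4/t)`, so `(1 - 2s) Φ(s)` is the
average of `√(4/t) ‖P_t 1_E - 1_E‖₁` against the kernel `a t^{a-1} dt`. This kernel gives mass
`ε^a` to `(0, ε)`, which tends to `1` as `a → 0⁺`: the averages eventually dominate any lower
bound that the integrand satisfies near `0`.
-/

open MeasureTheory Filter Set Topology

lemma lintegral_Ioo_mul_rpow_sub_one {a ε : ℝ} (ha : 0 < a) (hε : 0 ≤ ε) :
    ∫⁻ t in Ioo 0 ε, ENNReal.ofReal (a * t ^ (a - 1)) = ENNReal.ofReal (ε ^ a) := by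
  have hint : IntegrableOn (fun t : ℝ => a * t ^ (a - 1)) (Ioo 0 ε) :=
    (((intervalIntegral.intervalIntegrable_rpow' (by linarith)).const_mul a).1).mono_set
      (by simpa [hε] using Ioo_subset_Ioc_self)
  rw [← ofReal_integral_eq_lintegral_ofReal hint
    ((ae_restrict_iff' measurableSet_Ioo).2 (.of_forall fun t ht => by
      have := Real.rpow_pos_of_pos ht.1 (a - 1); positivity)),
    ← integral_Ioc_eq_integral_Ioo, ← intervalIntegral.integral_of_le hε,
    intervalIntegral.integral_const_mul, integral_rpow (Or.inl (by linarith))]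
  simp [Real.zero_rpow ha.ne', mul_div_cancel₀ _ ha.ne']

lemma sqrt_four_div_eq {t : ℝ} (ht : 0 ≤ t) : √(4 / t) = 2 * t ^ (-(1 / 2) : ℝ) := by
  rw [Real.sqrt_div' _ ht, Real.rpow_neg ht, ← Real.sqrt_eq_rpow,
    show (4 : ℝ) = 2 ^ 2 by norm_num, Real.sqrt_sq zero_le_two, div_eq_mul_inv]

lemma liminf_nhdsGT_le_liminf_lintegral_mul_rpow_sub_one (g : ℝ → ENNReal) :
    liminf g (𝓝[>] 0) ≤
      liminf (fun a : ℝ => ∫⁻ t in Ioi 0, ENNReal.ofReal (a * t ^ (a - 1)) * g t) (𝓝[>] 0) := by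
  refine liminf_le_of_le (h := fun b hb => ?_)
  obtain ⟨ε, hε, hbg⟩ := mem_nhdsGT_iff_exists_Ioo_subset.mp hb
  have hlower : ∀ᶠ a in 𝓝[>] (0 : ℝ), ENNReal.ofReal (ε ^ a) * b ≤
      ∫⁻ t in Ioi 0, ENNReal.ofReal (a * t ^ (a - 1)) * g t := by
    filter_upwards [self_mem_nhdsWithin] with a (ha : 0 < a)
    calc ENNReal.ofReal (ε ^ a) * b
        = ∫⁻ t in Ioo 0 ε, ENNReal.ofReal (a * t ^ (a - 1)) * b := by
          rw [lintegral_mul_const _ (by fun_prop), lintegral_Ioo_mul_rpow_sub_one ha hε.out.le]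
      _ ≤ ∫⁻ t in Ioo 0 ε, ENNReal.ofReal (a * t ^ (a - 1)) * g t :=
          setLIntegral_mono' measurableSet_Ioo fun t ht => mul_le_mul_right (hbg ht) _
      _ ≤ ∫⁻ t in Ioi 0, ENNReal.ofReal (a * t ^ (a - 1)) * g t :=
          lintegral_mono_set fun t ht => ht.1
  have hmass : Tendsto (fun a : ℝ => ENNReal.ofReal (ε ^ a) * b) (𝓝[>] 0) (𝓝 b) := by
    have : Tendsto (fun a : ℝ => ENNReal.ofReal (ε ^ a)) (𝓝[>] 0) (𝓝 1) := by
      have hcont : ContinuousAt (fun a : ℝ => ENNReal.ofReal (ε ^ a)) 0 :=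
        ENNReal.continuous_ofReal.continuousAt.comp (Real.continuousAt_const_rpow hε.out.ne')
      simpa using hcont.tendsto.mono_left nhdsWithin_le_nhds
    simpa using ENNReal.Tendsto.mul_const this (Or.inl one_ne_zero)
  exact hmass.liminf_eq.ge.trans (liminf_le_liminf hlower)

lemma one_sub_two_mul_rpow_neg_one_add_mul_eq {s t : ℝ} (ht : 0 < t) (x : ℝ) :
    (1 - 2 * s) * (t ^ (-(1 + s)) * x) = ((1 / 2 - s) * t ^ (1 / 2 - s - 1)) * (√(4 / t) * x) := by
  rw [sqrt_four_div_eq ht.le, show -(1 + s) = 1 / 2 - s - 1 + -(1 / 2) by ring,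
    Real.rpow_add ht]
  ring

lemma ofReal_one_sub_two_mul_lintegral_eq {s : ℝ} (hs : s < 1 / 2) (n : ℝ → ℝ) :
    ENNReal.ofReal (1 - 2 * s) * ∫⁻ t in Ioi 0, ENNReal.ofReal (t ^ (-(1 + s)) * n t) =
      ∫⁻ t in Ioi 0, ENNReal.ofReal ((1 / 2 - s) * t ^ (1 / 2 - s - 1)) *
        ENNReal.ofReal (√(4 / t) * n t) := by
  rw [← lintegral_const_mul' _ _ ENNReal.ofReal_ne_top]
  refine setLIntegral_congr_fun measurableSet_Ioi fun t (ht : 0 < t) => ?_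
  rw [← ENNReal.ofReal_mul (by linarith), ← ENNReal.ofReal_mul (by positivity),
    one_sub_two_mul_rpow_neg_one_add_mul_eq ht]

lemma tendsto_half_sub_nhdsLT : Tendsto (fun s : ℝ => 1 / 2 - s) (𝓝[<] (1 / 2)) (𝓝[>] 0) := by
  refine tendsto_nhdsWithin_of_tendsto_nhds_of_eventually_within _ ?_ ?_
  · have : Tendsto (fun s : ℝ => 1 / 2 - s) (𝓝 (1 / 2)) (𝓝 (1 / 2 - 1 / 2)) :=
      (continuous_const.sub continuous_id).tendsto _
    exact (sub_self (1 / 2 : ℝ) ▸ this).mono_left nhdsWithin_le_nhds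
  · filter_upwards [self_mem_nhdsWithin] with s (hs : s < 1 / 2)
    exact sub_pos.2 hs

lemma liminf_sqrt_four_div_mul_le_liminf_lintegral (n : ℝ → ℝ) :
    liminf (fun t : ℝ => ENNReal.ofReal (√(4 / t) * n t)) (𝓝[>] 0) ≤
      liminf (fun s : ℝ => ENNReal.ofReal (1 - 2 * s) *
        ∫⁻ t in Ioi 0, ENNReal.ofReal (t ^ (-(1 + s)) * n t)) (𝓝[<] (1 / 2)) := by
  set K := fun a : ℝ => ∫⁻ t in Ioi 0, ENNReal.ofReal (a * t ^ (a - 1)) *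
    ENNReal.ofReal (√(4 / t) * n t)
  calc _ ≤ liminf K (𝓝[>] 0) := liminf_nhdsGT_le_liminf_lintegral_mul_rpow_sub_one _
    _ ≤ liminf (K ∘ fun s => 1 / 2 - s) (𝓝[<] (1 / 2)) :=
        tendsto_half_sub_nhdsLT.liminf_le_liminf_comp
    _ = _ := liminf_congr <| by
        filter_upwards [self_mem_nhdsWithin] with s (hs : s < 1 / 2)
        exact (ofReal_one_sub_two_mul_lintegral_eq hs n).symm

/-- For any family of linear operators on `L¹`,
`liminf_{s→(1/2)⁻} (1-2s) Φ(s) ≥ liminf_{t→0⁺} √(4/t) ‖P_t 1_E - 1_E‖₁`, where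
`Φ(s) = ∫_0^∞ t^{-(1+s)} ‖P_t 1_E - 1_E‖₁ dt` (with values in `[0,∞]`). -/
theorem stmt_4 {α : Type*} [MeasurableSpace α] {μ : Measure α}
    (P : ℝ → (Lp ℝ 1 μ →ₗ[ℝ] Lp ℝ 1 μ))
    (E : Set α) (hE : MeasurableSet E) (hEfin : μ E ≠ ⊤) :
    liminf (fun t : ℝ => ENNReal.ofReal
        (Real.sqrt (4 / t) * ‖P t (indicatorConstLp 1 hE hEfin (1 : ℝ)) -
          indicatorConstLp 1 hE hEfin (1 : ℝ)‖)) (nhdsWithin (0 : ℝ) (Ioi 0))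
    ≤ liminf (fun s : ℝ => ENNReal.ofReal (1 - 2 * s) *
        ∫⁻ t in Ioi (0 : ℝ), ENNReal.ofReal
          (t ^ (-(1 + s)) * ‖P t (indicatorConstLp 1 hE hEfin (1 : ℝ)) -
            indicatorConstLp 1 hE hEfin (1 : ℝ)‖))
      (nhdsWithin (1 / 2 : ℝ) (Iio (1 / 2))) :=
  liminf_sqrt_four_div_mul_le_liminf_lintegral _
end

section
/- For 0 < s < 1/2 and the Euclidean unit ball B ⊂ ℝ^n, the fractional perimeter P_s(B) = ∫_{ℝ^n}∫_{ℝ^n} |1_B(x) - 1_B(y)|/|x-y|^{n+2s} dx dy satisfies lim_{s→(1/2)^-} (1-2s) P_s(B) = (2π^{(n-1)/2}/Γ((n+1)/2)) · P(B), where P(B) = 2π^{n/2}/Γ(n/2) is the perimeter of B, given the explicit formula P_s(B) = n π^n Γ(1-2s) / (s Γ(n/2+1) Γ(1-s) Γ((n+2-2s)/2)). -/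
/-!
In the explicit formula only `Γ(1 - 2s)` is singular at `s = 1/2`, and `(1 - 2s) Γ(1 - 2s) =
Γ(2 - 2s) → 1`; every other factor is continuous there. The value of the remaining factors at
`s = 1/2` becomes the claimed product via `Γ(1/2) = √π` and `Γ(n/2 + 1) = (n/2) Γ(n/2)`.
-/

open MeasureTheory Real Filter Set
open scoped Topology

lemma Real.continuousAt_Gamma_of_pos {x : ℝ} (hx : 0 < x) : ContinuousAt Gamma x :=
  (differentiableAt_Gamma fun m => ((neg_nonpos.mpr m.cast_nonneg).trans_lt hx).ne').continuousAt

lemma Real.tendsto_self_mul_Gamma_nhds_zero :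
    Tendsto (fun x : ℝ => x * Gamma x) (𝓝[≠] 0) (𝓝 1) := by
  have h : ContinuousAt (fun x : ℝ => Gamma (x + 1)) 0 :=
    (continuousAt_Gamma_of_pos (by norm_num)).comp (by fun_prop)
  refine tendsto_nhdsWithin_congr (fun x hx => Gamma_add_one hx) ?_
  simpa using h.tendsto.mono_left nhdsWithin_le_nhds

lemma tendsto_one_sub_two_mul_mul_Gamma :
    Tendsto (fun s : ℝ => (1 - 2 * s) * Gamma (1 - 2 * s)) (𝓝[<] (1 / 2)) (𝓝 1) := by
  refine tendsto_self_mul_Gamma_nhds_zero.comp (tendsto_nhdsWithin_iff.mpr ⟨?_, ?_⟩)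
  · exact ((continuous_const.sub (continuous_const.mul continuous_id)).tendsto' _ _
      (by norm_num)).mono_left nhdsWithin_le_nhds
  · filter_upwards [self_mem_nhdsWithin] with s (hs : s < 1 / 2)
    exact sub_ne_zero.mpr (by linarith)

lemma mul_pi_pow_div_Gamma_eq {x : ℝ} (hx : 0 < x) :
    x * π ^ x / (1 / 2 * Gamma (x / 2 + 1) * Gamma (1 / 2) * Gamma ((x + 1) / 2)) =
      2 * π ^ ((x - 1) / 2) / Gamma ((x + 1) / 2) * (2 * π ^ (x / 2) / Gamma (x / 2)) := by
  have hpow : π ^ x = √π * (π ^ ((x - 1) / 2) * π ^ (x / 2)) := by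
    rw [sqrt_eq_rpow, ← rpow_add pi_pos, ← rpow_add pi_pos]
    ring_nf
  rw [Gamma_one_half_eq, Gamma_add_one (by positivity), hpow]
  have : 0 < Gamma (x / 2) := by positivity
  have : 0 < Gamma ((x + 1) / 2) := by positivity
  field_simp

theorem stmt_19_general (n : ℕ) (hn : 1 ≤ n) (P : ℝ → ℝ)
    (hPformula : ∀ s ∈ Ioo (0 : ℝ) (1 / 2), P s =
      n * π ^ n * Real.Gamma (1 - 2 * s) /
        (s * Real.Gamma ((n : ℝ) / 2 + 1) * Real.Gamma (1 - s) *
          Real.Gamma (((n : ℝ) + 2 - 2 * s) / 2))) :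
    Tendsto (fun s : ℝ => (1 - 2 * s) * P s) (nhdsWithin (1 / 2 : ℝ) (Iio (1 / 2)))
      (nhds (2 * π ^ ((n - 1 : ℝ) / 2) / Real.Gamma (((n : ℝ) + 1) / 2) *
        (2 * π ^ ((n : ℝ) / 2) / Real.Gamma ((n : ℝ) / 2)))) := by
  have hn : (0 : ℝ) < n := by exact_mod_cast hn
  set F : ℝ → ℝ := fun s => n * π ^ n /
    (s * Gamma ((n : ℝ) / 2 + 1) * Gamma (1 - s) * Gamma (((n : ℝ) + 2 - 2 * s) / 2))
  have hF : ContinuousAt F (1 / 2) := by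
    refine continuousAt_const.div (ContinuousAt.mul (ContinuousAt.mul ?_ ?_) ?_) ?_
    · fun_prop
    · exact (continuousAt_Gamma_of_pos (by norm_num)).comp (by fun_prop)
    · exact (continuousAt_Gamma_of_pos (by linarith)).comp (by fun_prop)
    · have : 0 < Gamma (((n : ℝ) + 2 - 2 * (1 / 2)) / 2) := Gamma_pos_of_pos (by linarith)
      positivity
  have hP : (fun s => (1 - 2 * s) * P s) =ᶠ[𝓝[<] (1 / 2)]
      fun s => (1 - 2 * s) * Gamma (1 - 2 * s) * F s := by
    filter_upwards [Ioo_mem_nhdsLT (by norm_num : (0 : ℝ) < 1 / 2)] with s hs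
    rw [hPformula s hs]
    ring
  have hF_half : F (1 / 2) = n * π ^ (n : ℝ) /
      (1 / 2 * Gamma ((n : ℝ) / 2 + 1) * Gamma (1 / 2) * Gamma (((n : ℝ) + 1) / 2)) := by
    norm_num [F, rpow_natCast]
    ring_nf
  rw [← mul_pi_pow_div_Gamma_eq hn, ← hF_half, ← one_mul (F _)]
  exact (tendsto_one_sub_two_mul_mul_Gamma.mul (hF.tendsto.mono_left nhdsWithin_le_nhds)).congr'
    hP.symm

/-- For the unit ball `B ⊂ ℝ^n`, given the explicit formula
`P_s(B) = n π^n Γ(1-2s) / (s Γ(n/2+1) Γ(1-s) Γ((n+2-2s)/2))` for the fractional perimeter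
`P_s(B) = ∬ |1_B(x)-1_B(y)|/|x-y|^{n+2s}`, one has
`lim_{s→(1/2)⁻} (1-2s) P_s(B) = (2π^{(n-1)/2}/Γ((n+1)/2)) · P(B)` with
`P(B) = 2π^{n/2}/Γ(n/2)`. -/
theorem stmt_19 (n : ℕ) (hn : 1 ≤ n) (P : ℝ → ℝ)
    (hPdef : ∀ s ∈ Ioo (0 : ℝ) (1 / 2), P s =
      ∫ x : EuclideanSpace ℝ (Fin n), ∫ y : EuclideanSpace ℝ (Fin n),
        |(Metric.ball (0 : EuclideanSpace ℝ (Fin n)) 1).indicator (fun _ => (1 : ℝ)) x -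
            (Metric.ball (0 : EuclideanSpace ℝ (Fin n)) 1).indicator (fun _ => (1 : ℝ)) y| /
          ‖x - y‖ ^ ((n : ℝ) + 2 * s))
    (hPformula : ∀ s ∈ Ioo (0 : ℝ) (1 / 2), P s =
      n * π ^ n * Real.Gamma (1 - 2 * s) /
        (s * Real.Gamma ((n : ℝ) / 2 + 1) * Real.Gamma (1 - s) *
          Real.Gamma (((n : ℝ) + 2 - 2 * s) / 2))) :
    Tendsto (fun s : ℝ => (1 - 2 * s) * P s) (nhdsWithin (1 / 2 : ℝ) (Iio (1 / 2)))
      (nhds (2 * π ^ ((n - 1 : ℝ) / 2) / Real.Gamma (((n : ℝ) + 1) / 2) *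
        (2 * π ^ ((n : ℝ) / 2) / Real.Gamma ((n : ℝ) / 2)))) :=
  stmt_19_general n hn P hPformula
end
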